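/- Let λ = [[½Q([m]× + M), Qn],[0,0]] with M = −Qᵀ((Qn)rᵀ + r(Qn)ᵀ)Q, where Q ∈ SO(3), r, m, n ∈ ℝ³. Then for ξ = [[[κ]×, ν],[0,0]], the pairing Tr(λᵀ q ξ) with q = [[Q,r],[0,1]] equals mᵀκ + nᵀν. -/
import Mathlib
open Matrix

def hat (κ : Fin 3 → ℝ) : Matrix (Fin 3) (Fin 3) ℝ :=
  !![0, -κ 2, κ 1; κ 2, 0, -κ 0; -κ 1, κ 0, 0]

def embed (A : Matrix (Fin 3) (Fin 3) ℝ) (v w : Fin 3 → ℝ) (c : ℝ) :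
    Matrix (Fin 4) (Fin 4) ℝ :=
  Matrix.of fun i j =>
    if h1 : (i : ℕ) < 3 then
      if h2 : (j : ℕ) < 3 then A ⟨i, h1⟩ ⟨j, h2⟩ else v ⟨i, h1⟩
    else
      if h2 : (j : ℕ) < 3 then w ⟨j, h2⟩ else c

lemma embed_transpose (A : Matrix (Fin 3) (Fin 3) ℝ) (v w : Fin 3 → ℝ) (c : ℝ) :
    (embed A v w c)ᵀ = embed Aᵀ w v c := by
  ext i j
  fin_cases i <;> fin_cases j <;>
    simp [embed, Matrix.transpose_apply,
      show ((0:Fin 4):ℕ) = 0 from rfl, show ((1:Fin 4):ℕ) = 1 from rfl,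
      show ((2:Fin 4):ℕ) = 2 from rfl, show ((3:Fin 4):ℕ) = 3 from rfl,
      show (⟨0, by norm_num⟩ : Fin 3) = 0 from rfl, show (⟨1, by norm_num⟩ : Fin 3) = 1 from rfl,
      show (⟨2, by norm_num⟩ : Fin 3) = 2 from rfl]

set_option maxHeartbeats 1000000 in
lemma embed_mul (A B : Matrix (Fin 3) (Fin 3) ℝ) (v v' w w' : Fin 3 → ℝ) (c c' : ℝ) :
    embed A v w c * embed B v' w' c' =
      embed (A * B + vecMulVec v w') (A *ᵥ v' + c' • v) (Bᵀ *ᵥ w + c • w')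
        (w ⬝ᵥ v' + c * c') := by
  ext i j
  rw [Matrix.mul_apply, Fin.sum_univ_four]
  fin_cases i <;> fin_cases j <;>
    simp [embed, Matrix.mulVec, Matrix.mul_apply, dotProduct, Fin.sum_univ_three, vecMulVec,
      Matrix.transpose_apply,
      show ((0:Fin 4):ℕ) = 0 from rfl, show ((1:Fin 4):ℕ) = 1 from rfl,
      show ((2:Fin 4):ℕ) = 2 from rfl, show ((3:Fin 4):ℕ) = 3 from rfl,
      show (⟨0, by norm_num⟩ : Fin 3) = 0 from rfl, show (⟨1, by norm_num⟩ : Fin 3) = 1 from rfl,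
      show (⟨2, by norm_num⟩ : Fin 3) = 2 from rfl] <;> try ring

lemma trace_embed (A : Matrix (Fin 3) (Fin 3) ℝ) (v w : Fin 3 → ℝ) (c : ℝ) :
    Matrix.trace (embed A v w c) = Matrix.trace A + c := by
  simp [Matrix.trace, Matrix.diag, embed, Fin.sum_univ_four, Fin.sum_univ_three,
    show ((0:Fin 4):ℕ) = 0 from rfl, show ((1:Fin 4):ℕ) = 1 from rfl,
    show ((2:Fin 4):ℕ) = 2 from rfl, show ((3:Fin 4):ℕ) = 3 from rfl,
    show (⟨0, by norm_num⟩ : Fin 3) = 0 from rfl, show (⟨1, by norm_num⟩ : Fin 3) = 1 from rfl,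
    show (⟨2, by norm_num⟩ : Fin 3) = 2 from rfl]

lemma trace_hat_hat (m κ : Fin 3 → ℝ) :
    Matrix.trace (hat m * hat κ) = -2 * (m ⬝ᵥ κ) := by
  simp [Matrix.trace, Matrix.diag, hat, Matrix.mul_apply, Fin.sum_univ_three, dotProduct]
  ring

lemma trace_sym_skew (S : Matrix (Fin 3) (Fin 3) ℝ) (hS : Sᵀ = S) (κ : Fin 3 → ℝ) :
    Matrix.trace (S * hat κ) = 0 := by
  have hK : (hat κ)ᵀ = -(hat κ) := by
    ext i j; fin_cases i <;> fin_cases j <;> simp [hat]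
  have := Matrix.trace_transpose (S * hat κ)
  rw [Matrix.transpose_mul, hK, hS, Matrix.neg_mul, Matrix.trace_neg,
    Matrix.trace_mul_comm] at this
  linarith

lemma hat_transpose (x : Fin 3 → ℝ) : (hat x)ᵀ = -(hat x) := by
  ext i j; fin_cases i <;> fin_cases j <;> simp [hat]

lemma vecMulVec_zero' (v : Fin 3 → ℝ) : vecMulVec v (0 : Fin 3 → ℝ) = 0 := by
  ext i j; simp [vecMulVec_apply]

lemma zero_vecMulVec' (v : Fin 3 → ℝ) : vecMulVec (0 : Fin 3 → ℝ) v = 0 := by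
  ext i j; simp [vecMulVec_apply]

lemma vecMulVec_transpose' (a b : Fin 3 → ℝ) : (vecMulVec a b)ᵀ = vecMulVec b a := by
  ext i j; simp [vecMulVec_apply, mul_comm]

/-- With the co-state λ = [[½Q([m]× + M), Qn],[0,0]], M = −Qᵀ((Qn)rᵀ + r(Qn)ᵀ)Q,
q = [[Q,r],[0,1]] and ξ = [[[κ]×, ν],[0,0]], the kinematic pairing reduces to
Tr(λᵀ q ξ) = mᵀκ + nᵀν. -/
theorem stmt_18 (Q : Matrix (Fin 3) (Fin 3) ℝ) (hQ : Qᵀ * Q = 1) (hdet : Q.det = 1)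
    (r m n κ ν : Fin 3 → ℝ) :
    let M : Matrix (Fin 3) (Fin 3) ℝ :=
      -(Qᵀ * (vecMulVec (Q *ᵥ n) r + vecMulVec r (Q *ᵥ n)) * Q)
    let lam : Matrix (Fin 4) (Fin 4) ℝ :=
      embed ((1 / 2 : ℝ) • (Q * (hat m + M))) (Q *ᵥ n) 0 0
    let q : Matrix (Fin 4) (Fin 4) ℝ := embed Q r 0 1
    let ξ : Matrix (Fin 4) (Fin 4) ℝ := embed (hat κ) ν 0 0
    Matrix.trace (lamᵀ * q * ξ) = m ⬝ᵥ κ + n ⬝ᵥ ν := by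
  intro M lam q ξ
  have hMsymm : Mᵀ = M := by
    simp only [M, Matrix.transpose_neg, Matrix.transpose_mul, Matrix.transpose_add,
      Matrix.transpose_transpose, vecMulVec_transpose']
    rw [add_comm, Matrix.mul_assoc]
  have h1 : lamᵀ = embed ((1 / 2 : ℝ) • (Q * (hat m + M)))ᵀ (0 : Fin 3 → ℝ) (Q *ᵥ n) 0 :=
    embed_transpose _ _ _ _
  rw [h1, embed_mul, embed_mul, trace_embed]
  have hn : Qᵀ *ᵥ (Q *ᵥ n) = n := by
    rw [Matrix.mulVec_mulVec, hQ, Matrix.one_mulVec]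
  have hAQ : ((1 / 2 : ℝ) • (Q * (hat m + M)))ᵀ * Q = (1 / 2 : ℝ) • (-(hat m) + M) := by
    rw [Matrix.transpose_smul, Matrix.transpose_mul, Matrix.smul_mul, Matrix.mul_assoc,
      hQ, Matrix.mul_one, Matrix.transpose_add, hat_transpose, hMsymm]
  simp only [hAQ, hn, vecMulVec_zero', zero_vecMulVec', add_zero, Matrix.zero_mul, Matrix.trace_zero, Matrix.add_mul, Matrix.smul_mul,
    smul_zero, add_zero, zero_mul, mul_zero, mul_one, zero_smul, smul_eq_mul,
    Matrix.trace_add, Matrix.trace_smul, Matrix.neg_mul, Matrix.trace_neg,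
    trace_hat_hat, trace_sym_skew M hMsymm κ, dotProduct_zero, zero_dotProduct]
  ring
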